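/- arXiv:2605.19773 — 2 statements merged into one kernel-verified Lean document; each statement's English description precedes it below -/
import Mathlib

section
/- Let p ≥ 5 be a prime with p ≡ 1 (mod 3). Define c(n) = 3·Σ_{d|n} χ₃(d)d⁴ − 27·Σ_{d|n} χ₃(n/d)d⁴. Then for all m ≥ 1 and r ≥ 1, c(m·p^r) ≡ c(m·p^{r−1}) (mod p^{4r}). -/
/-- The nontrivial Dirichlet character mod 3, as a function on ℕ with values in ℤ. -/
def chi3 (n : ℕ) : ℤ := if n % 3 = 1 then 1 else if n % 3 = 2 then -1 else 0

/-- `c(n) = 3 Σ_{d ∣ n} χ₃(d) d⁴ − 27 Σ_{d ∣ n} χ₃(n/d) d⁴`. -/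
def cMix (n : ℕ) : ℤ :=
  3 * (∑ d ∈ n.divisors, chi3 d * (d : ℤ) ^ 4)
    - 27 * (∑ d ∈ n.divisors, chi3 (n / d) * (d : ℤ) ^ 4)

/-!
Both divisor sums in `c` are Dirichlet convolutions of multiplicative functions, and because
`χ₃(p) = 1` each of them takes the value `σ₄(p^k) = ∑_{i ≤ k} p^{4i}` at powers of `p`, so
its consecutive differences there are `p^{4(k+1)}`. Writing `m = p^a M` with `p ∤ M`,
multiplicativity turns `f(m p^r) - f(m p^{r-1})` into `f(M) · p^{4(a+r)}`.
-/

open ArithmeticFunction Finset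
open scoped ArithmeticFunction.zeta

lemma chi3_mul (a b : ℕ) : chi3 (a * b) = chi3 a * chi3 b := by
  unfold chi3
  rw [Nat.mul_mod]
  have ha : a % 3 = 0 ∨ a % 3 = 1 ∨ a % 3 = 2 := by omega
  have hb : b % 3 = 0 ∨ b % 3 = 1 ∨ b % 3 = 2 := by omega
  rcases ha with h | h | h <;> rcases hb with h' | h' | h' <;> simp [h, h']

lemma chi3_pow_of_mod_three_eq_one {p : ℕ} (hp : p % 3 = 1) (i : ℕ) : chi3 (p ^ i) = 1 := by
  induction i with
  | zero => rfl
  | succ i ih => rw [pow_succ, chi3_mul, ih, one_mul, chi3, if_pos hp]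

def chi3Arith : ArithmeticFunction ℤ := ⟨chi3, rfl⟩

lemma chi3Arith_apply (n : ℕ) : chi3Arith n = chi3 n := rfl

lemma isMultiplicative_chi3Arith : chi3Arith.IsMultiplicative :=
  ⟨rfl, fun {a b} _ => chi3_mul a b⟩

lemma natCast_pow_apply (k n : ℕ) (hk : k ≠ 0) :
    (pow k : ArithmeticFunction ℤ) n = (n : ℤ) ^ k := by
  rcases eq_or_ne n 0 with rfl | hn
  · simp [hk]
  · simp [pow_apply, hn]

lemma cMix_eq (n : ℕ) :
    cMix n = 3 * (chi3Arith.pmul (pow 4) * ζ) n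
      - 27 * (chi3Arith * (pow 4 : ArithmeticFunction ℤ)) n := by
  rw [cMix, coe_mul_zeta_apply, ArithmeticFunction.mul_apply,
    Nat.sum_divisorsAntidiagonal'
      (f := fun a b => chi3Arith a * (pow 4 : ArithmeticFunction ℤ) b)]
  simp only [pmul_apply, chi3Arith_apply, natCast_pow_apply 4 _ (by norm_num)]

theorem ArithmeticFunction.IsMultiplicative.pow_dvd_sub_mul_prime_pow {R : Type*} [CommRing R]
    {f : ArithmeticFunction R} (hf : f.IsMultiplicative) {p : ℕ} (hp : p.Prime) {x : R}
    (hx : ∀ k, x ^ (k + 1) ∣ f (p ^ (k + 1)) - f (p ^ k)) (m r : ℕ) :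
    x ^ r ∣ f (m * p ^ r) - f (m * p ^ (r - 1)) := by
  rcases r with _ | s
  · simp
  rcases eq_or_ne m 0 with rfl | hm
  · simp
  set a := m.factorization p
  have hcop : ∀ j, (m / p ^ a).Coprime (p ^ j) := fun j =>
    ((Nat.coprime_ordCompl hp hm).pow_left j).symm
  have hsplit : ∀ j, f (m * p ^ j) = f (m / p ^ a) * f (p ^ (a + j)) := fun j => by
    rw [← hf.map_mul_of_coprime (hcop _), pow_add, ← mul_assoc, mul_comm _ (p ^ a),
      Nat.ordProj_mul_ordCompl_eq_self]
  rw [hsplit, hsplit, Nat.add_sub_cancel, ← add_assoc, ← mul_sub]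
  exact dvd_mul_of_dvd_right ((pow_dvd_pow x (by omega)).trans (hx (a + s))) _

lemma pmul_mul_zeta_apply_prime_pow_of_eq_one {p : ℕ} (hp : p.Prime)
    {f g : ArithmeticFunction ℤ} (hf : ∀ i, f (p ^ i) = 1) (k : ℕ) :
    (f.pmul g * ζ) (p ^ k) = ∑ i ∈ range (k + 1), g (p ^ i) := by
  rw [coe_mul_zeta_apply, Nat.sum_divisors_prime_pow hp]
  simp only [pmul_apply, hf, one_mul]

lemma mul_apply_prime_pow_of_eq_one {p : ℕ} (hp : p.Prime) {f g : ArithmeticFunction ℤ}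
    (hf : ∀ i, f (p ^ i) = 1) (k : ℕ) :
    (f * g) (p ^ k) = ∑ i ∈ range (k + 1), g (p ^ i) := by
  rw [ArithmeticFunction.mul_apply, Nat.sum_divisorsAntidiagonal' (f := fun a b => f a * g b),
    Nat.sum_divisors_prime_pow hp]
  refine sum_congr rfl fun i hi => ?_
  rw [Nat.pow_div (by simpa [Nat.lt_succ_iff] using hi) hp.pos, hf, one_mul]

theorem stmt1_general (p : ℕ) (hp : p.Prime) (hsplit : p % 3 = 1)
    (m r : ℕ) :
    ((p : ℤ) ^ (4 * r)) ∣ cMix (m * p ^ r) - cMix (m * p ^ (r - 1)) := by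
  have hχ : ∀ i, chi3Arith (p ^ i) = 1 := chi3_pow_of_mod_three_eq_one hsplit
  have hstep : ∀ F : ArithmeticFunction ℤ,
      (∀ k, F (p ^ k) = ∑ i ∈ range (k + 1), (pow 4 : ArithmeticFunction ℤ) (p ^ i)) →
      ∀ k, ((p : ℤ) ^ 4) ^ (k + 1) ∣ F (p ^ (k + 1)) - F (p ^ k) := fun F hF k => by
    rw [hF, hF, sum_range_succ_sub_sum, natCast_pow_apply 4 _ (by norm_num), Nat.cast_pow,
      ← pow_mul, ← pow_mul, mul_comm]
  have hF := ((isMultiplicative_chi3Arith.pmul isMultiplicative_pow.natCast).mul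
    isMultiplicative_zeta.natCast).pow_dvd_sub_mul_prime_pow hp
    (hstep _ (pmul_mul_zeta_apply_prime_pow_of_eq_one hp hχ)) m r
  have hG := (isMultiplicative_chi3Arith.mul isMultiplicative_pow.natCast
    ).pow_dvd_sub_mul_prime_pow hp (hstep _ (mul_apply_prime_pow_of_eq_one hp hχ)) m r
  rw [cMix_eq, cMix_eq, pow_mul, sub_sub_sub_comm, ← mul_sub, ← mul_sub]
  exact dvd_sub (hF.mul_left 3) (hG.mul_left 27)

theorem stmt1 (p : ℕ) (hp : p.Prime) (hp5 : 5 ≤ p) (hsplit : p % 3 = 1)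
    (m r : ℕ) (hm : 1 ≤ m) (hr : 1 ≤ r) :
    ((p : ℤ) ^ (4 * r)) ∣ cMix (m * p ^ r) - cMix (m * p ^ (r - 1)) :=
  stmt1_general p hp hsplit m r
end

section
/- Let A ∈ ℤ[[q]] and H ∈ 1 + q·ℤ[[q]] be power series with integer coefficients. For a prime p and integers m ≥ 0, r ≥ 0, the coefficient of q^{m·p^r} in A(q)·H(q)^{m·p^r} is congruent mod p to the coefficient of q^m in Λ_p^r(A)(q)·H(q)^m, where Λ_p(Σ aₙqⁿ) = Σ a_{pn}qⁿ and Λ_p^r is the r-fold iterate. -/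
open PowerSeries

/-- The Cartier-type operator `Λ_p (Σ aₙ qⁿ) = Σ a_{pn} qⁿ`. -/
noncomputable def lam (p : ℕ) (f : PowerSeries ℤ) : PowerSeries ℤ :=
  PowerSeries.mk fun n => PowerSeries.coeff (p * n) f

/-!
Over `ZMod p` the Frobenius gives `H ^ (m * p ^ r) = H(q ^ p ^ r) ^ m`, i.e. the `p ^ r`-fold
expansion of `H ^ m`. Multiplying `A` by a series in `q ^ k` and reading off the coefficient of
`q ^ (k * m)` only sees the coefficients of `A` at multiples of `k`, so
`[q ^ (k * m)] A · B(q ^ k) = [q ^ m] Λ_k(A) · B`; finally `Λ_p^r = Λ_{p^r}`.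
-/

open Finset.HasAntidiagonal

theorem lam_iterate (p r : ℕ) : (lam p)^[r] = lam (p ^ r) := by
  induction r with
  | zero => funext f; ext n; simp [lam]
  | succ r ih =>
    funext f
    ext n
    rw [Function.iterate_succ_apply', ih]
    simp only [lam, coeff_mk, pow_succ, mul_assoc]

theorem coeff_mul_expand_eq_coeff_lam_mul (k : ℕ) (hk : k ≠ 0) (m : ℕ) (A B : PowerSeries ℤ) :
    coeff (k * m) (A * expand k hk B) = coeff m (lam k A * B) := by
  have hscale : Function.Injective (Prod.map (k * ·) (k * ·) : ℕ × ℕ → ℕ × ℕ) :=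
    (mul_right_injective₀ hk).prodMap (mul_right_injective₀ hk)
  have hsub : (antidiagonal m).image (Prod.map (k * ·) (k * ·)) ⊆ antidiagonal (k * m) := by
    intro y hy
    obtain ⟨x, hx, rfl⟩ := Finset.mem_image.mp hy
    rw [mem_antidiagonal] at hx ⊢
    simp [← mul_add, hx]
  rw [coeff_mul, coeff_mul, ← Finset.sum_subset hsub, Finset.sum_image hscale.injOn]
  · simp [lam]
  · rintro ⟨i, j⟩ hij hnot
    rw [coeff_expand_of_not_dvd k hk B, mul_zero]
    rintro ⟨j', rfl⟩
    rw [mem_antidiagonal] at hij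
    obtain ⟨i', rfl⟩ : k ∣ i :=
      (Nat.dvd_add_left (dvd_mul_right k j')).mp (hij ▸ dvd_mul_right k m)
    refine hnot (Finset.mem_image.mpr ⟨(i', j'), ?_, rfl⟩)
    rw [mem_antidiagonal]
    exact mul_left_cancel₀ hk ((mul_add k i' j').trans hij)

theorem PowerSeries.pow_prime_pow_eq_expand (p : ℕ) [Fact p.Prime] (r : ℕ)
    (f : PowerSeries (ZMod p)) :
    f ^ p ^ r = expand (p ^ r) (pow_ne_zero r (Fact.out : p.Prime).ne_zero) f := by
  rw [← MvPowerSeries.map_iterateFrobenius_expand _ (Fact.out : p.Prime).ne_zero]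
  have hid : iterateFrobenius (ZMod p) p r = RingHom.id (ZMod p) :=
    RingHom.ext ZMod.pow_card_pow
  rw [hid, MvPowerSeries.map_id]
  rfl

theorem stmt13_general (p : ℕ) (hp : p.Prime) (A H : PowerSeries ℤ) (m r : ℕ) :
    (p : ℤ) ∣ PowerSeries.coeff (m * p ^ r) (A * H ^ (m * p ^ r))
      - PowerSeries.coeff m ((lam p)^[r] A * H ^ m) := by
  have := Fact.mk hp
  have hpr : p ^ r ≠ 0 := pow_ne_zero r hp.ne_zero
  have hfrob : map (Int.castRingHom (ZMod p)) (H ^ (p ^ r * m)) =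
      map (Int.castRingHom (ZMod p)) (expand (p ^ r) hpr (H ^ m)) := by
    rw [pow_mul', map_pow, pow_prime_pow_eq_expand, map_expand]
  rw [← ZMod.intCast_eq_intCast_iff_dvd_sub, lam_iterate,
    ← coeff_mul_expand_eq_coeff_lam_mul _ hpr, mul_comm m]
  simp only [← eq_intCast (Int.castRingHom (ZMod p)), ← coeff_map, map_mul, hfrob]

theorem stmt13 (p : ℕ) (hp : p.Prime) (A H : PowerSeries ℤ)
    (hH : PowerSeries.constantCoeff H = 1) (m r : ℕ) :
    (p : ℤ) ∣ PowerSeries.coeff (m * p ^ r) (A * H ^ (m * p ^ r))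
      - PowerSeries.coeff m ((lam p)^[r] A * H ^ m) :=
  stmt13_general p hp A H m r
end
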